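/- In any voting equilibrium ⃗a with heterogeneous voters of types T(r_i, k_i) or L(r_i, k_i): (1) every voter is either truthful (or abstaining, for lazy voters) or votes for a candidate in H̄_{k_i}(s_⃗a); and (2) no voter votes for her least-preferred candidate among her possible winners W_i(⃗a, r_i), provided |W_i(⃗a, r_i)| ≥ 2. -/
import Mathlib


open Finset

/-- The Plurality winner of a score vector: highest score, ties broken
lexicographically (smallest index wins). -/
noncomputable def winner {m : ℕ} [NeZero m] (s : Fin m → ℕ) : Fin m :=
  (Finset.univ.filter fun c => ∀ d, s d ≤ s c).min'
    (by
      obtain ⟨c, hc⟩ := Finite.exists_max s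
      exact ⟨c, Finset.mem_filter.mpr ⟨Finset.mem_univ c, hc⟩⟩)

/-- Add one vote for candidate `x` to score vector `s`. -/
def addVote {m : ℕ} (s : Fin m → ℕ) (x : Fin m) : Fin m → ℕ :=
  fun c => s c + if c = x then 1 else 0

/-- The winner after one additional vote for `x` is added to `s`. -/
noncomputable def outcome {m : ℕ} [NeZero m] (s : Fin m → ℕ) (x : Fin m) : Fin m :=
  winner (addVote s x)

/-- Action `b` S-beats action `c` (w.r.t. strict preference `pref`). -/
def Beats {m : ℕ} [NeZero m] (S : Set (Fin m → ℕ)) (pref : Fin m → Fin m → Prop)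
    (b c : Fin m) : Prop :=
  ∃ s ∈ S, pref (outcome s b) (outcome s c)

/-- Action `b` S-dominates action `c`. -/
def Dominates {m : ℕ} [NeZero m] (S : Set (Fin m → ℕ)) (pref : Fin m → Fin m → Prop)
    (b c : Fin m) : Prop :=
  Beats S pref b c ∧ ¬ Beats S pref c b

/-- ℓ1 distance between score vectors. -/
def l1 {m : ℕ} (s s' : Fin m → ℕ) : ℕ := ∑ c, Nat.dist (s c) (s' c)

/-- Scores of the profile `a` excluding voter `i`'s vote. -/
def scoreExc {m n : ℕ} (a : Fin n → Fin m) (i : Fin n) : Fin m → ℕ :=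
  fun c => (Finset.univ.filter fun j => j ≠ i ∧ a j = c).card

/-- Scores of the full profile `a`. -/
def scoreOf {m n : ℕ} (a : Fin n → Fin m) : Fin m → ℕ :=
  fun c => (Finset.univ.filter fun j => a j = c).card

/-- The accessible set `S_i(a, r)`: ℓ1 ball of radius `r` around the scores of the others. -/
def ball {m n : ℕ} (a : Fin n → Fin m) (i : Fin n) (r : ℕ) : Set (Fin m → ℕ) :=
  {s' | l1 s' (scoreExc a i) ≤ r}

/-- Possible winners for voter `i` at state `a` with uncertainty `r`. -/
noncomputable def PossW {m n : ℕ} [NeZero m] (a : Fin n → Fin m) (i : Fin n) (r : ℕ) :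
    Set (Fin m) :=
  {c | ∃ s' ∈ ball a i r, outcome s' c = c}

/-- `H̄_w(s)`: candidates within `w` votes of the winner's score. -/
noncomputable def Hbar {m : ℕ} [NeZero m] (w : ℕ) (s : Fin m → ℕ) : Set (Fin m) :=
  {c | s (winner s) ≤ s c + w}

/-- Add an optional vote (`none` = abstain) to a score vector. -/
def addVoteO {m : ℕ} (s : Fin m → ℕ) : Option (Fin m) → (Fin m → ℕ)
  | none => s
  | some x => addVote s x

/-- Winner after adding one optional vote. -/
noncomputable def outcomeO {m : ℕ} [NeZero m] (s : Fin m → ℕ) (act : Option (Fin m)) : Fin m :=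
  winner (addVoteO s act)

/-- Action `b` S-beats action `c` (actions may include abstention). -/
def BeatsO {m : ℕ} [NeZero m] (S : Set (Fin m → ℕ)) (pref : Fin m → Fin m → Prop)
    (b c : Option (Fin m)) : Prop :=
  ∃ s ∈ S, pref (outcomeO s b) (outcomeO s c)

/-- Action `b` S-dominates action `c` (actions may include abstention). -/
def DominatesO {m : ℕ} [NeZero m] (S : Set (Fin m → ℕ)) (pref : Fin m → Fin m → Prop)
    (b c : Option (Fin m)) : Prop :=
  BeatsO S pref b c ∧ ¬ BeatsO S pref c b

/-- Scores of an optional-action profile excluding voter `i`. -/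
def scoreExcO {m n : ℕ} (a : Fin n → Option (Fin m)) (i : Fin n) : Fin m → ℕ :=
  fun c => (Finset.univ.filter fun j => j ≠ i ∧ a j = some c).card

/-- Scores of a full optional-action profile. -/
def scoreOfO {m n : ℕ} (a : Fin n → Option (Fin m)) : Fin m → ℕ :=
  fun c => (Finset.univ.filter fun j => a j = some c).card

/-- ℓ1 accessible set for optional-action profiles. -/
def ballO {m n : ℕ} (a : Fin n → Option (Fin m)) (i : Fin n) (r : ℕ) : Set (Fin m → ℕ) :=
  {s' | l1 s' (scoreExcO a i) ≤ r}

/-- Candidates locally dominating voter `i`'s current action. -/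
noncomputable def DsetO {m n : ℕ} [NeZero m] (Q : Fin n → Fin m → Fin m → Prop) (r : ℕ)
    (a : Fin n → Option (Fin m)) (i : Fin n) : Set (Fin m) :=
  {c | DominatesO (ballO a i r) (Q i) (some c) (a i)}

/-- Possible winners for voter `i` (optional-action profile). -/
noncomputable def PossWO {m n : ℕ} [NeZero m] (a : Fin n → Option (Fin m)) (i : Fin n) (r : ℕ) :
    Set (Fin m) :=
  {c | ∃ s' ∈ ballO a i r, outcomeO s' (some c) = c}

/-- The response of a `T(r,k)` or `L(r,k)` voter `i` with default action `dflt`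
(`some (q i)` for truth-bias, `none` for lazy-bias): make a strategic move to the most
preferred locally dominating candidate (radius `r`) if one exists; otherwise keep the
current action if it `S_i(a,k)`-beats the default, and revert to the default otherwise. -/
noncomputable def RespTL {m n : ℕ} [NeZero m] (Q : Fin n → Fin m → Fin m → Prop) (r k : ℕ)
    (dflt : Option (Fin m)) (a : Fin n → Option (Fin m)) (i : Fin n)
    (act' : Option (Fin m)) : Prop :=
  (∃ c ∈ DsetO Q r a i, act' = some c ∧ ∀ d ∈ DsetO Q r a i, d ≠ c → Q i c d)
  ∨ (DsetO Q r a i = ∅ ∧ BeatsO (ballO a i k) (Q i) (a i) dflt ∧ act' = a i)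
  ∨ (DsetO Q r a i = ∅ ∧ ¬ BeatsO (ballO a i k) (Q i) (a i) dflt ∧ act' = dflt)
section Toolkit

variable {m : ℕ} [NeZero m]

lemma winner_mem_filter (s : Fin m → ℕ) :
    winner s ∈ Finset.univ.filter fun c => ∀ d, s d ≤ s c :=
  Finset.min'_mem _ _

lemma winner_max (s : Fin m → ℕ) (d : Fin m) : s d ≤ s (winner s) :=
  (Finset.mem_filter.mp (winner_mem_filter s)).2 d

lemma winner_min (s : Fin m → ℕ) {d : Fin m} (h : s d = s (winner s)) :
    winner s ≤ d := by
  apply Finset.min'_le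
  exact Finset.mem_filter.mpr ⟨Finset.mem_univ d, fun e => h ▸ winner_max s e⟩

lemma winner_eq {s : Fin m → ℕ} {x : Fin m} (h1 : ∀ d, s d ≤ s x)
    (h2 : ∀ d, s d = s x → x ≤ d) : winner s = x := by
  have hmax : s x = s (winner s) := le_antisymm (winner_max s x) (h1 _)
  exact le_antisymm (winner_min s hmax) (h2 _ hmax.symm)

omit [NeZero m] in
lemma addVote_apply (s : Fin m → ℕ) (x c : Fin m) :
    addVote s x c = s c + if c = x then 1 else 0 := rfl

omit [NeZero m] in
lemma addVote_comm (s : Fin m → ℕ) (x y : Fin m) :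
    addVote (addVote s x) y = addVote (addVote s y) x := by
  funext c; simp only [addVote_apply]; split_ifs <;> omega

/-- Adding a vote for `x` either elects `x` or leaves the winner unchanged. -/
lemma winner_addVote (t : Fin m → ℕ) (x : Fin m) :
    winner (addVote t x) = x ∨ winner (addVote t x) = winner t := by
  by_cases hvx : winner (addVote t x) = x
  · exact Or.inl hvx
  · right
    refine (winner_eq ?_ ?_).symm
    · intro d
      have h := winner_max (addVote t x) d
      simp only [addVote_apply, if_neg hvx, add_zero] at h
      by_cases hdx : d = x
      · subst hdx; simp only [eq_self_iff_true, if_true] at h; omega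
      · simpa [if_neg hdx] using h
    · intro d hd
      by_cases hdx : d = x
      · exfalso
        have h := winner_max (addVote t x) x
        simp only [addVote_apply, eq_self_iff_true, if_true, if_neg hvx, add_zero] at h
        subst hdx; omega
      · refine winner_min (addVote t x) ?_
        simp only [addVote_apply, if_neg hdx, if_neg hvx, add_zero]
        exact hd

/-- Adding a vote for the current winner keeps it the winner. -/
lemma winner_addVote_self {t : Fin m → ℕ} {x : Fin m} (h : winner t = x) :
    winner (addVote t x) = x := by
  refine winner_eq ?_ ?_
  · intro d
    have h1 := winner_max t d
    rw [h] at h1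
    by_cases hdx : d = x
    · subst hdx; exact le_refl _
    · simp only [addVote_apply, if_neg hdx, eq_self_iff_true, if_true, add_zero]; omega
  · intro d hd
    by_cases hdx : d = x
    · exact le_of_eq hdx.symm
    · exfalso
      have h1 := winner_max t d
      rw [h] at h1
      simp only [addVote_apply, if_neg hdx, eq_self_iff_true, if_true, add_zero] at hd
      omega

/-- Removing a vote for a non-winner keeps the winner. -/
lemma winner_addVote_cancel {t : Fin m → ℕ} {x c : Fin m}
    (h : winner (addVote t c) = x) (hxc : x ≠ c) : winner t = x := by
  have hle : ∀ d, addVote t c d ≤ addVote t c x := fun d => h ▸ winner_max _ d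
  refine winner_eq ?_ ?_
  · intro d
    have hd := hle d
    by_cases hdc : d = c
    · subst hdc; simp only [addVote_apply, eq_self_iff_true, if_true, if_neg hxc, add_zero] at hd; omega
    · simp only [addVote_apply, if_neg hdc, if_neg hxc, add_zero] at hd; exact hd
  · intro d hd
    by_cases hdc : d = c
    · exfalso
      have h2 := hle c
      simp only [addVote_apply, eq_self_iff_true, if_true, if_neg hxc, add_zero] at h2
      rw [hdc] at hd
      omega
    · have h3 : addVote t c d = addVote t c x := by
        simp only [addVote_apply, if_neg hdc, if_neg hxc]; omega
      rw [← h] at h3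
      have h4 := winner_min (addVote t c) h3
      rwa [h] at h4

lemma outcome_idem (s : Fin m → ℕ) (x : Fin m) :
    outcome s (outcome s x) = outcome s x := by
  rcases winner_addVote s x with h | h
  · simp only [outcome]
    rw [h]
    exact h
  · simp only [outcome]
    rw [h]
    exact winner_addVote_self rfl

end Toolkit
section Toolkit2

variable {m : ℕ} [NeZero m]

lemma Q_asymm {α : Type*} (Q : α → α → Prop) [IsStrictTotalOrder α Q] {x y : α}
    (h1 : Q x y) (h2 : Q y x) : False :=
  irrefl_of Q x (trans_of Q h1 h2)

lemma exists_Q_max {α : Type*} [DecidableEq α] (Q : α → α → Prop)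
    [IsStrictTotalOrder α Q] (t : Finset α) (ht : t.Nonempty) :
    ∃ b ∈ t, ∀ e ∈ t, e ≠ b → Q b e := by
  classical
  induction t using Finset.induction_on with
  | empty => exact absurd ht (by simp)
  | @insert a s hnm ih =>
    by_cases hs : s.Nonempty
    · obtain ⟨b, hb, hmax⟩ := ih hs
      rcases trichotomous_of Q a b with h | h | h
      · refine ⟨a, Finset.mem_insert_self a s, fun e he hne => ?_⟩
        rcases Finset.mem_insert.mp he with rfl | he'
        · exact absurd rfl hne
        · by_cases heb : e = b
          · exact heb ▸ h
          · exact trans_of Q h (hmax e he' heb)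
      · exact absurd (h ▸ hb) hnm
      · refine ⟨b, Finset.mem_insert_of_mem hb, fun e he hne => ?_⟩
        rcases Finset.mem_insert.mp he with rfl | he'
        · exact h
        · exact hmax e he' hne
    · refine ⟨a, Finset.mem_insert_self a s, fun e he hne => ?_⟩
      rcases Finset.mem_insert.mp he with rfl | he'
      · exact absurd rfl hne
      · exact absurd ⟨e, he'⟩ hs

omit [NeZero m] in
lemma pair_le_sum {f : Fin m → ℕ} {x y : Fin m} (h : x ≠ y) :
    f x + f y ≤ ∑ z, f z := by
  calc f x + f y = ∑ z ∈ ({x, y} : Finset (Fin m)), f z := (Finset.sum_pair h).symm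
    _ ≤ ∑ z, f z := Finset.sum_le_sum_of_subset (Finset.subset_univ _)

lemma le_add_dist (a b : ℕ) : b ≤ a + Nat.dist a b := by
  simp [Nat.dist]; omega

/-- Discrete connectedness: along any "box path" between `u` and `v`, a predicate
that holds at `u` but not at `v` must flip across two adjacent states. -/
lemma flip_aux {m : ℕ} (P : (Fin m → ℕ) → Prop) :
    ∀ N (u v : Fin m → ℕ), l1 u v ≤ N → P u → ¬ P v →
    ∃ s s' : Fin m → ℕ, ∃ x : Fin m,
      (∀ y, min (u y) (v y) ≤ s y ∧ s y ≤ max (u y) (v y)) ∧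
      (∀ y, min (u y) (v y) ≤ s' y ∧ s' y ≤ max (u y) (v y)) ∧
      (∀ y, y ≠ x → s' y = s y) ∧ (s' x = s x + 1 ∨ s x = s' x + 1) ∧
      P s ∧ ¬ P s' := by
  intro N
  induction N with
  | zero =>
    intro u v h hu hv
    have huv : u = v := by
      funext y
      refine Nat.eq_of_dist_eq_zero ?_
      have := Finset.sum_eq_zero_iff.mp (Nat.le_zero.mp h) y (Finset.mem_univ y)
      exact this
    exact absurd (huv ▸ hu) hv
  | succ N ih =>
    intro u v h hu hv
    by_cases huv : u = v
    · exact absurd (huv ▸ hu) hv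
    · have hex : ∃ x, u x ≠ v x := by
        by_contra hc
        push_neg at hc
        exact huv (funext hc)
      obtain ⟨x, hx⟩ := hex
      set u' : Fin m → ℕ :=
        Function.update u x (if u x < v x then u x + 1 else u x - 1) with hu'def
      have hcoord : ∀ y, y ≠ x → u' y = u y := fun y hy => Function.update_of_ne hy _ _
      have hux : u' x = if u x < v x then u x + 1 else u x - 1 :=
        Function.update_self _ _ _
      have hbox : ∀ y, min (u y) (v y) ≤ u' y ∧ u' y ≤ max (u y) (v y) := by
        intro y
        by_cases hyx : y = x
        · subst hyx; rw [hux]; split_ifs <;> omega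
        · rw [hcoord y hyx]; omega
      have hdist : Nat.dist (u' x) (v x) + 1 = Nat.dist (u x) (v x) := by
        rw [hux]; simp only [Nat.dist]; split_ifs <;> omega
      have hl1 : l1 u' v ≤ N := by
        have h1 : Nat.dist (u x) (v x) + ∑ y ∈ Finset.univ.erase x, Nat.dist (u y) (v y)
            = ∑ y, Nat.dist (u y) (v y) :=
          Finset.add_sum_erase _ (fun y => Nat.dist (u y) (v y)) (Finset.mem_univ x)
        have h2 : Nat.dist (u' x) (v x) + ∑ y ∈ Finset.univ.erase x, Nat.dist (u' y) (v y)
            = ∑ y, Nat.dist (u' y) (v y) :=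
          Finset.add_sum_erase _ (fun y => Nat.dist (u' y) (v y)) (Finset.mem_univ x)
        have h3 : ∑ y ∈ Finset.univ.erase x, Nat.dist (u' y) (v y)
            = ∑ y ∈ Finset.univ.erase x, Nat.dist (u y) (v y) := by
          refine Finset.sum_congr rfl fun y hy => ?_
          rw [hcoord y (Finset.mem_erase.mp hy).1]
        rw [h3] at h2
        simp only [l1] at h ⊢
        omega
      by_cases hP : P u'
      · obtain ⟨s, s', x', hs, hs', hco, hstep, hPs, hPs'⟩ := ih u' v hl1 hP hv
        refine ⟨s, s', x', fun y => ?_, fun y => ?_, hco, hstep, hPs, hPs'⟩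
        · have := hs y; have := hbox y; omega
        · have := hs' y; have := hbox y; omega
      · refine ⟨u, u', x, fun y => by omega, hbox, hcoord, ?_, hu, hP⟩
        rw [hux]
        split_ifs with hlt
        · left; rfl
        · right; omega

end Toolkit2
section Toolkit3

/-- Coordinatewise median of `u`, `v`, `e`. -/
def midf {m : ℕ} (u v e : Fin m → ℕ) : Fin m → ℕ :=
  fun y => max (min (u y) (v y)) (min (max (u y) (v y)) (e y))

lemma mid_bound1 {a b e t : ℕ}
    (h1 : min a (max (min a b) (min (max a b) e)) ≤ t)
    (h2 : t ≤ max a (max (min a b) (min (max a b) e))) :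
    Nat.dist t e ≤ Nat.dist a e := by
  simp only [Nat.dist]; omega

lemma mid_bound2 {a b e t : ℕ}
    (h1 : min (max (min a b) (min (max a b) e)) b ≤ t)
    (h2 : t ≤ max (max (min a b) (min (max a b) e)) b) :
    Nat.dist t e ≤ Nat.dist b e := by
  simp only [Nat.dist]; omega

lemma box_subset_ball1 {m : ℕ} {u v e : Fin m → ℕ} {r : ℕ} (hu : l1 u e ≤ r)
    {t : Fin m → ℕ}
    (ht : ∀ y, min (u y) (midf u v e y) ≤ t y ∧ t y ≤ max (u y) (midf u v e y)) :
    l1 t e ≤ r :=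
  le_trans (Finset.sum_le_sum fun y _ => mid_bound1 (ht y).1 (ht y).2) hu

lemma box_subset_ball2 {m : ℕ} {u v e : Fin m → ℕ} {r : ℕ} (hv : l1 v e ≤ r)
    {t : Fin m → ℕ}
    (ht : ∀ y, min (midf u v e y) (v y) ≤ t y ∧ t y ≤ max (midf u v e y) (v y)) :
    l1 t e ≤ r :=
  le_trans (Finset.sum_le_sum fun y _ => mid_bound2 (ht y).1 (ht y).2) hv

end Toolkit3
section Toolkit4

variable {m n : ℕ} [NeZero m]

lemma flip_contra (a : Fin n → Option (Fin m)) (i : Fin n) (r : ℕ)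
    (c dstar : Fin m) (hdc : dstar ≠ c)
    (hall : ∀ s ∈ ballO a i r, outcome s dstar = outcome s c)
    (s s' : Fin m → ℕ) (x : Fin m) (hsball : s ∈ ballO a i r)
    (hco : ∀ y, y ≠ x → s' y = s y) (hstep : s' x = s x + 1 ∨ s x = s' x + 1)
    (hPs : outcome s c = c) (hPs' : ¬ outcome s' c = c) : False := by
  have hwin : winner s = c := by
    have h1 : outcome s dstar = c := (hall s hsball).trans hPs
    rcases winner_addVote s dstar with h | h
    · exact absurd (h.symm.trans h1) hdc
    · exact h.symm.trans h1
  simp only [outcome] at hPs hPs'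
  rcases hstep with hinc | hdec
  · -- s' = addVote s x
    have hs'eq : s' = addVote s x := by
      funext y
      by_cases hyx : y = x
      · subst hyx; rw [hinc, addVote_apply, if_pos rfl]
      · rw [hco y hyx, addVote_apply, if_neg hyx, add_zero]
    rw [hs'eq] at hPs'
    by_cases hxc : x = c
    · subst hxc
      exact hPs' (winner_addVote_self hPs)
    · have hcomm : addVote (addVote s x) c = addVote (addVote s c) x := addVote_comm s x c
      rcases winner_addVote (addVote s c) x with h | h
      · exfalso
        have hcnex : ¬ c = x := fun hcx => hxc hcx.symm
        have htc : addVote (addVote s c) x c = s c + 1 := by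
          rw [addVote_apply, if_neg hcnex, add_zero, addVote_apply, if_pos rfl]
        have htx : addVote (addVote s c) x x = s x + 1 := by
          rw [addVote_apply, if_pos rfl, addVote_apply, if_neg hxc, add_zero]
        have hcx := winner_max (addVote (addVote s c) x) c
        rw [h] at hcx
        have hxs := winner_max s x
        rw [hwin] at hxs
        have hxec : s x = s c := by rw [htc, htx] at hcx; omega
        have h5 : winner s ≤ x := winner_min s (by rw [hwin]; exact hxec)
        have h6 : winner (addVote (addVote s c) x) ≤ c :=
          winner_min _ (by rw [h, htc, htx, hxec])
        rw [h] at h6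
        rw [hwin] at h5
        exact hxc (le_antisymm h6 h5)
      · apply hPs'
        rw [hcomm, h]
        exact hPs
  · -- s = addVote s' x
    have hseq : s = addVote s' x := by
      funext y
      by_cases hyx : y = x
      · subst hyx; rw [hdec, addVote_apply, if_pos rfl]
      · rw [← hco y hyx, addVote_apply, if_neg hyx, add_zero]
    by_cases hxc : x = c
    · subst hxc
      rw [hseq] at hwin
      exact hPs' hwin
    · have h2 : winner (addVote (addVote s' c) x) = c := by
        rw [addVote_comm, ← hseq]; exact hPs
      rcases winner_addVote (addVote s' c) x with h | h
      · exact hxc (h.symm.trans h2)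
      · exact hPs' (h.symm.trans h2)

lemma exists_beat_state (a : Fin n → Option (Fin m)) (i : Fin n) (r : ℕ)
    (c dstar : Fin m) (hdc : dstar ≠ c)
    (s0 : Fin m → ℕ) (hs0b : s0 ∈ ballO a i r) (hs0 : outcome s0 c = c)
    (s1 : Fin m → ℕ) (hs1b : s1 ∈ ballO a i r) (hs1 : outcome s1 dstar = dstar)
    (hall : ∀ s ∈ ballO a i r, outcome s dstar = outcome s c) : False := by
  classical
  have hs0r : l1 s0 (scoreExcO a i) ≤ r := hs0b
  have hs1r : l1 s1 (scoreExcO a i) ≤ r := hs1b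
  have hP1 : ¬ outcome s1 c = c := by
    rw [← hall s1 hs1b, hs1]; exact hdc
  set mid := midf s0 s1 (scoreExcO a i) with hmiddef
  by_cases hmid : outcome mid c = c
  · obtain ⟨s, s', x, hbs, hbs', hco, hstep, hPs, hPs'⟩ :=
      flip_aux (fun t => outcome t c = c) (l1 mid s1) mid s1 le_rfl hmid hP1
    have hsball : s ∈ ballO a i r := box_subset_ball2 hs1r hbs
    exact flip_contra a i r c dstar hdc hall s s' x hsball hco hstep hPs hPs'
  · obtain ⟨s, s', x, hbs, hbs', hco, hstep, hPs, hPs'⟩ :=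
      flip_aux (fun t => outcome t c = c) (l1 s0 mid) s0 mid le_rfl hs0 hmid
    have hsball : s ∈ ballO a i r := box_subset_ball1 hs0r hbs
    exact flip_contra a i r c dstar hdc hall s s' x hsball hco hstep hPs hPs'

end Toolkit4
section Toolkit5

variable {m n : ℕ} [NeZero m]

lemma le_add_dist' (a b : ℕ) : a ≤ b + Nat.dist a b := by
  simp [Nat.dist]; omega

lemma no_beat_default (Qi : Fin m → Fin m → Prop) [IsStrictTotalOrder (Fin m) Qi]
    (qq : Fin m) (hqq : ∀ d, d ≠ qq → Qi qq d) (df : Option (Fin m))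
    (hdf : df = some qq ∨ df = none) (s : Fin m → ℕ) :
    ¬ Qi (winner s) (outcomeO s df) := by
  intro hcon
  rcases hdf with rfl | rfl
  · rcases winner_addVote s qq with h | h
    · have hh : outcomeO s (some qq) = qq := h
      rw [hh] at hcon
      by_cases hwq : winner s = qq
      · exact irrefl_of Qi _ (hwq ▸ hcon)
      · exact Q_asymm Qi hcon (hqq _ hwq)
    · have hh : outcomeO s (some qq) = winner s := h
      rw [hh] at hcon
      exact irrefl_of Qi _ hcon
  · exact irrefl_of Qi _ hcon

omit [NeZero m] in
lemma scoreOfO_eq (a : Fin n → Option (Fin m)) (i : Fin n) (d : Fin m) :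
    scoreOfO a d = scoreExcO a i d + if a i = some d then 1 else 0 := by
  classical
  by_cases h : a i = some d
  · rw [if_pos h]
    have hins : (Finset.univ.filter fun j => a j = some d)
        = insert i (Finset.univ.filter fun j => j ≠ i ∧ a j = some d) := by
      ext j
      simp only [Finset.mem_filter, Finset.mem_insert, Finset.mem_univ, true_and]
      constructor
      · intro hj
        by_cases hji : j = i
        · exact Or.inl hji
        · exact Or.inr ⟨hji, hj⟩
      · rintro (rfl | ⟨_, hj⟩)
        · exact h
        · exact hj
    show (Finset.univ.filter fun j => a j = some d).card = _
    rw [hins, Finset.card_insert_of_notMem (by simp)]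
    rfl
  · rw [if_neg h, add_zero]
    show (Finset.univ.filter fun j => a j = some d).card
        = (Finset.univ.filter fun j => j ≠ i ∧ a j = some d).card
    congr 1
    ext j
    simp only [Finset.mem_filter, Finset.mem_univ, true_and]
    constructor
    · intro hj
      exact ⟨fun hji => h (hji ▸ hj), hj⟩
    · exact fun hj => hj.2

end Toolkit5

/-- in any voting equilibrium with heterogeneous `T(r_i,k_i)`/`L(r_i,k_i)`
voters, (1) every voter either plays her default action (truthful vote or abstention) or
votes for a candidate in `H̄_{k_i}(s_a)`, and (2) no voter votes for her least-preferred
candidate among her possible winners `W_i(a, r_i)` (provided there are at least two). -/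
theorem general_equilibrium_structure {m n : ℕ} [NeZero m]
    (Q : Fin n → Fin m → Fin m → Prop)
    (hQ : ∀ i, IsStrictTotalOrder (Fin m) (Q i))
    (r k : Fin n → ℕ)
    (q : Fin n → Fin m) (hq : ∀ i, ∀ d, d ≠ q i → Q i (q i) d)
    (dflt : Fin n → Option (Fin m))
    (hdflt : ∀ i, dflt i = some (q i) ∨ dflt i = none)
    (a : Fin n → Option (Fin m))
    (heq : ∀ i, RespTL Q (r i) (k i) (dflt i) a i (a i)) :
    ∀ i : Fin n,
      (a i = dflt i ∨ ∃ c : Fin m, a i = some c ∧ c ∈ Hbar (k i) (scoreOfO a)) ∧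
      (∀ c : Fin m, a i = some c → 2 ≤ (PossWO a i (r i)).ncard →
        ¬(c ∈ PossWO a i (r i) ∧ ∀ d ∈ PossWO a i (r i), d ≠ c → Q i d c)) := by
  intro i
  haveI := hQ i
  constructor
  · -- Part 1
    rcases heq i with ⟨c0, hc0, hac0, _⟩ | ⟨_, hBeats, _⟩ | ⟨_, _, hrev⟩
    · exfalso
      simp only [DsetO, Set.mem_setOf_eq] at hc0
      rw [hac0] at hc0
      obtain ⟨⟨s, _, hQs⟩, _⟩ := hc0
      exact irrefl_of (Q i) _ hQs
    · right
      obtain ⟨s, hsball, hQs⟩ := hBeats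
      cases ha : a i with
      | none =>
        exfalso
        rw [ha] at hQs
        exact no_beat_default (Q i) (q i) (hq i) (dflt i) (hdflt i) s hQs
      | some c =>
        refine ⟨c, rfl, ?_⟩
        rw [ha] at hQs
        have hoc : winner (addVote s c) = c := by
          rcases winner_addVote s c with h | h
          · exact h
          · exfalso
            rw [show outcomeO s (some c) = winner s from h] at hQs
            exact no_beat_default (Q i) (q i) (hq i) (dflt i) (hdflt i) s hQs
        have hkey : ∀ d, d ≠ c → s d ≤ s c + 1 := by
          intro d hdc2
          have hm := winner_max (addVote s c) d
          rw [hoc] at hm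
          rw [addVote_apply, if_neg hdc2, add_zero, addVote_apply, if_pos rfl] at hm
          exact hm
        show c ∈ Hbar (k i) (scoreOfO a)
        simp only [Hbar, Set.mem_setOf_eq]
        by_cases hWc : winner (scoreOfO a) = c
        · rw [hWc]; omega
        · have hsl : ∑ z, Nat.dist (s z) (scoreExcO a i z) ≤ k i := hsball
          have hpair : Nat.dist (s (winner (scoreOfO a))) (scoreExcO a i (winner (scoreOfO a)))
              + Nat.dist (s c) (scoreExcO a i c) ≤ k i :=
            le_trans (pair_le_sum (f := fun z => Nat.dist (s z) (scoreExcO a i z)) hWc) hsl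
          have h1 := le_add_dist (s (winner (scoreOfO a)))
            (scoreExcO a i (winner (scoreOfO a)))
          have h2 := le_add_dist' (s c) (scoreExcO a i c)
          have h3 := hkey _ hWc
          have hW : scoreOfO a (winner (scoreOfO a))
              = scoreExcO a i (winner (scoreOfO a)) := by
            rw [scoreOfO_eq a i, if_neg, add_zero]
            rw [ha]
            intro hcon
            exact hWc (Option.some_injective _ hcon).symm
          have hc' : scoreOfO a c = scoreExcO a i c + 1 := by
            rw [scoreOfO_eq a i, if_pos ha]
          omega
    · left; exact hrev
  · -- Part 2
    intro c hac hcard hcon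
    obtain ⟨hcP, hleast⟩ := hcon
    have hD : DsetO Q (r i) a i = ∅ := by
      rcases heq i with ⟨c0, hc0, hac0, _⟩ | ⟨hD, _, _⟩ | ⟨hD, _, _⟩
      · exfalso
        simp only [DsetO, Set.mem_setOf_eq] at hc0
        rw [hac0] at hc0
        obtain ⟨⟨s, _, hQs⟩, _⟩ := hc0
        exact irrefl_of (Q i) _ hQs
      · exact hD
      · exact hD
    have hfin : (PossWO a i (r i)).Finite := Set.toFinite _
    have hme : c ∈ hfin.toFinset := hfin.mem_toFinset.mpr hcP
    obtain ⟨b, hbT, hbmax⟩ := exists_Q_max (Q i) hfin.toFinset ⟨c, hme⟩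
    have hbP : b ∈ PossWO a i (r i) := hfin.mem_toFinset.mp hbT
    have hbmax' : ∀ e ∈ PossWO a i (r i), e ≠ b → Q i b e :=
      fun e he => hbmax e (hfin.mem_toFinset.mpr he)
    obtain ⟨d2, hd2P, hd2c⟩ := Set.exists_ne_of_one_lt_ncard (s := PossWO a i (r i)) (by omega) c
    have hbc : b ≠ c := by
      rintro rfl
      exact Q_asymm (Q i) (hbmax' d2 hd2P hd2c) (hleast d2 hd2P hd2c)
    have hmemPW : ∀ s ∈ ballO a i (r i), ∀ x, outcome s x ∈ PossWO a i (r i) :=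
      fun s hs x => ⟨s, hs, outcome_idem s x⟩
    obtain ⟨s0, hs0b, hs0⟩ := hcP
    obtain ⟨s1, hs1b, hs1⟩ := hbP
    have hBeats : BeatsO (ballO a i (r i)) (Q i) (some b) (a i) := by
      rw [hac]
      by_contra hnb
      have hall : ∀ s ∈ ballO a i (r i), outcome s b = outcome s c := by
        intro s hs
        by_contra hne
        apply hnb
        refine ⟨s, hs, ?_⟩
        show Q i (outcome s b) (outcome s c)
        rcases winner_addVote s b with hb1 | hb1
        · have hob : outcome s b = b := hb1
          rcases winner_addVote s c with hc1 | hc1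
          · rw [hob, show outcome s c = c from hc1]
            exact hleast b (⟨s1, hs1b, hs1⟩ : _ ∈ PossWO a i (r i)) hbc
          · have hvb : outcome s c ≠ b := fun h => hne (by rw [hob, h])
            rw [hob]
            exact hbmax' _ (hmemPW s hs c) hvb
        · have hu : outcome s b ∈ PossWO a i (r i) := hmemPW s hs b
          by_cases huc : outcome s b = c
          · exfalso
            have hws : winner s = c := hb1.symm.trans huc
            have hcc : outcome s c = c := winner_addVote_self hws
            exact hne (huc.trans hcc.symm)
          · rcases winner_addVote s c with hc1 | hc1
            · rw [show outcome s c = c from hc1]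
              exact hleast _ hu huc
            · exact absurd (hb1.trans hc1.symm) hne
      exact exists_beat_state a i (r i) c b hbc s0 hs0b hs0 s1 hs1b hs1 hall
    have hNB : ¬ BeatsO (ballO a i (r i)) (Q i) (a i) (some b) := by
      rw [hac]
      rintro ⟨s, hs, hQs⟩
      have hQs' : Q i (outcome s c) (outcome s b) := hQs
      have hu : outcome s c ∈ PossWO a i (r i) := hmemPW s hs c
      have hv : outcome s b ∈ PossWO a i (r i) := hmemPW s hs b
      have hne : outcome s c ≠ outcome s b := fun h => irrefl_of (Q i) _ (h ▸ hQs')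
      rcases winner_addVote s b with hb1 | hb1
      · have hocb : outcome s c ≠ b := fun h => hne (h.trans hb1.symm)
        rw [show outcome s b = b from hb1] at hQs'
        exact Q_asymm (Q i) hQs' (hbmax' _ hu hocb)
      · rcases winner_addVote s c with hc1 | hc1
        · have hobc : outcome s b ≠ c := fun h => hne (hc1.trans h.symm)
          rw [show outcome s c = c from hc1] at hQs'
          exact Q_asymm (Q i) hQs' (hleast _ hv hobc)
        · exact hne (hc1.trans hb1.symm)
    have hmem : b ∈ DsetO Q (r i) a i := by
      simp only [DsetO, Set.mem_setOf_eq, DominatesO]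
      exact ⟨hBeats, hNB⟩
    rw [hD] at hmem
    exact hmem
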